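/- The homomorphism φ : G_{n,p}^2 → G_{n,d}^2 (φ(a_{ij}^0) = a_{ij}, φ(a_{ij}^1) = τ_i a_{ij} τ_i) is an isomorphism onto the subgroup H_{n,d}^2, with inverse χ; in particular G_{n,p}^2 ≅ H_{n,d}^2. -/

import Mathlib

abbrev GenG (n : ℕ) := {p : Fin n × Fin n // p.1 < p.2}

def relsG (n : ℕ) : Set (FreeGroup (GenG n)) :=
  {r | (∃ a : GenG n, r = .of a * .of a) ∨
    (∃ a b : GenG n, ({a.1.1, a.1.2, b.1.1, b.1.2} : Finset (Fin n)).card = 4 ∧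
      r = .of a * .of b * (.of b * .of a)⁻¹) ∨
    (∃ i j k : Fin n, ∃ hij : i < j, ∃ hik : i < k, ∃ hjk : j < k,
      r = .of ⟨(i,j),hij⟩ * .of ⟨(i,k),hik⟩ * .of ⟨(j,k),hjk⟩ *
          (.of ⟨(j,k),hjk⟩ * .of ⟨(i,k),hik⟩ * .of ⟨(i,j),hij⟩)⁻¹)}

abbrev G2 (n : ℕ) := PresentedGroup (relsG n)

abbrev GenP (n : ℕ) := GenG n × Bool

def relsP (n : ℕ) : Set (FreeGroup (GenP n)) :=
  {r | (∃ a : GenP n, r = .of a * .of a) ∨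
    (∃ a b : GenG n, ∃ e₁ e₂ : Bool, ({a.1.1, a.1.2, b.1.1, b.1.2} : Finset (Fin n)).card = 4 ∧
      r = .of (a,e₁) * .of (b,e₂) * (.of (b,e₂) * .of (a,e₁))⁻¹) ∨
    (∃ i j k : Fin n, ∃ hij : i < j, ∃ hik : i < k, ∃ hjk : j < k, ∃ e₁ e₂ e₃ : Bool,
      Bool.xor e₁ (Bool.xor e₂ e₃) = false ∧
      r = .of (⟨(i,j),hij⟩,e₁) * .of (⟨(i,k),hik⟩,e₂) * .of (⟨(j,k),hjk⟩,e₃) *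
          (.of (⟨(j,k),hjk⟩,e₃) * .of (⟨(i,k),hik⟩,e₂) * .of (⟨(i,j),hij⟩,e₁))⁻¹)}

abbrev G2p (n : ℕ) := PresentedGroup (relsP n)

abbrev GenD (n : ℕ) := GenG n ⊕ Fin n

def relsD (n : ℕ) : Set (FreeGroup (GenD n)) :=
  {r | (∃ a : GenG n, r = .of (.inl a) * .of (.inl a)) ∨
    (∃ a b : GenG n, ({a.1.1, a.1.2, b.1.1, b.1.2} : Finset (Fin n)).card = 4 ∧
      r = .of (.inl a) * .of (.inl b) * (.of (.inl b) * .of (.inl a))⁻¹) ∨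
    (∃ i j k : Fin n, ∃ hij : i < j, ∃ hik : i < k, ∃ hjk : j < k,
      r = .of (.inl ⟨(i,j),hij⟩) * .of (.inl ⟨(i,k),hik⟩) * .of (.inl ⟨(j,k),hjk⟩) *
          (.of (.inl ⟨(j,k),hjk⟩) * .of (.inl ⟨(i,k),hik⟩) * .of (.inl ⟨(i,j),hij⟩))⁻¹) ∨
    (∃ i : Fin n, r = .of (.inr i) * .of (.inr i)) ∨
    (∃ i j : Fin n, i ≠ j ∧ r = .of (.inr i) * .of (.inr j) * (.of (.inr j) * .of (.inr i))⁻¹) ∨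
    (∃ i j : Fin n, ∃ h : i < j,
      r = .of (.inr i) * .of (.inr j) * .of (.inl ⟨(i,j),h⟩) * .of (.inr j) * .of (.inr i) *
          (.of (.inl ⟨(i,j),h⟩))⁻¹) ∨
    (∃ a : GenG n, ∃ k : Fin n, k ≠ a.1.1 ∧ k ≠ a.1.2 ∧
      r = .of (.inl a) * .of (.inr k) * (.of (.inr k) * .of (.inl a))⁻¹)}

abbrev G2d (n : ℕ) := PresentedGroup (relsD n)

def NiMap (n : ℕ) (i : Fin n) : GenD n → Multiplicative (ZMod 2) :=
  Sum.elim (fun _ => 1) (fun k => if k = i then Multiplicative.ofAdd 1 else 1)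

theorem relsD_Ni (n : ℕ) (i : Fin n) : ∀ r ∈ relsD n, FreeGroup.lift (NiMap n i) r = 1 := by
  intro r hr
  rcases hr with ⟨a,rfl⟩|⟨a,b,_,rfl⟩|⟨i',j,k,hij,hik,hjk,rfl⟩|⟨a,rfl⟩|⟨a,b,_,rfl⟩|⟨a,b,h,rfl⟩|⟨a,k,_,_,rfl⟩ <;>
    simp only [map_mul, map_inv, FreeGroup.lift_apply_of, NiMap, Sum.elim_inl, Sum.elim_inr] <;>
    first
      | (split_ifs <;> decide)
      | decide

def Ni (n : ℕ) (i : Fin n) : G2d n →* Multiplicative (ZMod 2) :=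
  PresentedGroup.toGroup (relsD_Ni n i)

def Hsub (n : ℕ) : Subgroup (G2d n) := ⨅ i : Fin n, (Ni n i).ker

def wordProd (n : ℕ) (w : List (GenD n)) : G2d n := (w.map PresentedGroup.of).prod

def chiWord {n : ℕ} : List (GenD n) → (Fin n → Bool) → G2p n
  | [], _ => 1
  | Sum.inl a :: t, c => PresentedGroup.of (a, Bool.xor (c a.1.1) (c a.1.2)) * chiWord t c
  | Sum.inr i :: t, c => chiWord t (Function.update c i (!c i))

/-!
The group `(ℤ/2)ⁿ` acts on `G_{n,p}²` by letting `v` add `v_i + v_j` to the parity bit of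
`a_{ij}^ε`; the triple relations survive because the three added bits sum to zero. In
`K = G_{n,p}² ⋊ (ℤ/2)ⁿ` the elements `a_{ij}^0` and the basis vectors `e_i` satisfy the relations of
`G_{n,d}²`, which gives `Θ : G_{n,d}² → K` with `a_{ij} ↦ a_{ij}^0` and `τ_i ↦ e_i`. Conversely, `φ`
and `v ↦ ∏ τ_i^{v_i}` combine to `Ψ : K → G_{n,d}²` with `Ψ ∘ Θ = id`, so `Θ` is injective. Since
`Θ ∘ φ` is the inclusion of `G_{n,p}²` and the `(ℤ/2)ⁿ`-component of `Θ g` records the parities of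
the `τ_i` in `g`, `φ` maps `G_{n,p}²` isomorphically onto `H_{n,d}² = Θ⁻¹(G_{n,p}²)`, with inverse
`g ↦ Θ(g).left`. Evaluating `Θ` letter by letter on a word is exactly the recursion defining `χ`.
-/

open PresentedGroup SemidirectProduct

theorem Finset.pairwise_ne_of_card_eq_four {α : Type*} [DecidableEq α] {x y z w : α}
    (h : ({x, y, z, w} : Finset α).card = 4) :
    x ≠ y ∧ x ≠ z ∧ x ≠ w ∧ y ≠ z ∧ y ≠ w ∧ z ≠ w := by
  refine ⟨?_, ?_, ?_, ?_, ?_, ?_⟩ <;> rintro rfl <;>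
    grind [Finset.card_insert_le, Finset.card_singleton]

namespace SemidirectProduct

variable {N G H : Type*} [Group N] [Group G] [Group H] {φ : G →* MulAut N}

theorem inr_mul_inl (g : G) (x : N) : (inr g : N ⋊[φ] G) * inl x = inl (φ g x) * inr g := by
  rw [inl_aut, map_inv, inv_mul_cancel_right]

theorem left_inl_mul (x : N) (y : N ⋊[φ] G) : (inl x * y).left = x * y.left := by
  simp [mul_left]

def mulEquivKerOfInjective (f : N →* H) (θ : H →* N ⋊[φ] G) (hθ : Function.Injective θ)
    (hθf : ∀ x, θ (f x) = inl x) : N ≃* (rightHom.comp θ).ker where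
  toFun x := ⟨f x, by simp [hθf]⟩
  invFun h := (θ h).left
  left_inv x := by simp [hθf]
  right_inv h := Subtype.ext <| hθ <| by
    have hright : (θ h).right = 1 := h.2
    rw [hθf]
    conv_rhs => rw [← inl_left_mul_inr_right (θ h), hright, map_one, mul_one]
  map_mul' x y := Subtype.ext (map_mul f x y)

end SemidirectProduct

theorem zmod_two_eq_one_or_eq_ofAdd_one (x : Multiplicative (ZMod 2)) : x = 1 ∨ x = .ofAdd 1 := by
  revert x; decide

theorem zmod_two_ofAdd_one_ne_one : (.ofAdd 1 : Multiplicative (ZMod 2)) ≠ 1 := by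
  decide

theorem zmod_two_mul_self (x : Multiplicative (ZMod 2)) : x * x = 1 := by
  revert x; decide

section ZModTwo

variable {G : Type*} [Group G]

def zmodTwoHom (g : G) (hg : g * g = 1) : Multiplicative (ZMod 2) →* G where
  toFun x := if x = 1 then 1 else g
  map_one' := if_pos rfl
  map_mul' x y := by
    obtain rfl | rfl := zmod_two_eq_one_or_eq_ofAdd_one x <;>
      obtain rfl | rfl := zmod_two_eq_one_or_eq_ofAdd_one y <;>
      simp [zmod_two_mul_self, hg]

theorem zmodTwoHom_ofAdd_one (g : G) (hg : g * g = 1) :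
    zmodTwoHom g hg (.ofAdd 1) = g := by
  simp [zmodTwoHom]

theorem zmodTwoHom_commute {g h : G} (hg : g * g = 1) (hh : h * h = 1) (hgh : Commute g h)
    (x y : Multiplicative (ZMod 2)) : Commute (zmodTwoHom g hg x) (zmodTwoHom h hh y) := by
  simp only [zmodTwoHom, MonoidHom.coe_mk, OneHom.coe_mk]
  split_ifs <;> simp [hgh]

end ZModTwo

section

variable {n : ℕ}

abbrev Flips (n : ℕ) := Fin n → Multiplicative (ZMod 2)

namespace Flips

def single (k : Fin n) : Flips n := Pi.mulSingle k (.ofAdd 1)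

-- the bit `v_i + v_j` of `ℤ/2` for the chord `a = (i, j)`
def parity (v : Flips n) (a : GenG n) : Bool := decide (v a.1.1 ≠ v a.1.2)

def ofColoring (c : Fin n → Bool) : Flips n := fun i => if c i then .ofAdd 1 else 1

theorem mul_self (v : Flips n) : v * v = 1 :=
  funext fun i => zmod_two_mul_self (v i)

theorem parity_mul (v w : Flips n) (a : GenG n) :
    parity (v * w) a = xor (parity v a) (parity w a) := by
  have key : ∀ x y z t : Multiplicative (ZMod 2),
      decide (x * z ≠ y * t) = xor (decide (x ≠ y)) (decide (z ≠ t)) := by decide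
  exact key _ _ _ _

theorem parity_one (a : GenG n) : parity 1 a = false := by
  simp [parity]

theorem parity_single (k : Fin n) (a : GenG n) :
    parity (single k) a = decide (k = a.1.1 ∨ k = a.1.2) := by
  have hne : a.1.1 ≠ a.1.2 := a.2.ne
  by_cases h₁ : k = a.1.1
  · subst h₁; simp [parity, single, hne]
  · by_cases h₂ : k = a.1.2
    · subst h₂; simp [parity, single, hne, (zmod_two_ofAdd_one_ne_one).symm]
    · simp [parity, single, h₁, h₂, Ne.symm h₁, Ne.symm h₂]

theorem parity_ofColoring (c : Fin n → Bool) (a : GenG n) :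
    parity (ofColoring c) a = xor (c a.1.1) (c a.1.2) := by
  unfold parity ofColoring
  cases c a.1.1 <;> cases c a.1.2 <;> decide

theorem ofColoring_false : ofColoring (fun _ : Fin n => false) = 1 := rfl

theorem ofColoring_mul_single (c : Fin n → Bool) (i : Fin n) :
    ofColoring c * single i = ofColoring (Function.update c i (!c i)) := by
  funext k
  by_cases h : k = i
  · subst h
    cases hc : c k <;> simp [ofColoring, single, hc, zmod_two_mul_self]
  · simp [ofColoring, single, h]

end Flips

namespace G2p

theorem of_mul_self (g : GenP n) : (of g : G2p n) * of g = 1 :=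
  one_of_mem (Or.inl ⟨g, rfl⟩)

theorem of_commute (a b : GenG n) (e₁ e₂ : Bool)
    (h : ({a.1.1, a.1.2, b.1.1, b.1.2} : Finset (Fin n)).card = 4) :
    Commute (of (a, e₁) : G2p n) (of (b, e₂)) :=
  mk_eq_mk_of_mul_inv_mem (Or.inr (Or.inl ⟨a, b, e₁, e₂, h, rfl⟩))

theorem of_triple (i j k : Fin n) (hij : i < j) (hik : i < k) (hjk : j < k) (e₁ e₂ e₃ : Bool)
    (h : xor e₁ (xor e₂ e₃) = false) :
    (of (⟨(i,j),hij⟩, e₁) : G2p n) * of (⟨(i,k),hik⟩, e₂) * of (⟨(j,k),hjk⟩, e₃) =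
      of (⟨(j,k),hjk⟩, e₃) * of (⟨(i,k),hik⟩, e₂) * of (⟨(i,j),hij⟩, e₁) :=
  mk_eq_mk_of_mul_inv_mem (Or.inr (Or.inr ⟨i, j, k, hij, hik, hjk, e₁, e₂, e₃, h, rfl⟩))

def twistGen (v : Flips n) (g : GenP n) : GenP n := (g.1, xor g.2 (v.parity g.1))

theorem mapsTo_twistGen (v : Flips n) :
    Set.MapsTo (FreeGroup.map (twistGen v)) (relsP n) (relsP n) := by
  rintro r (⟨g, rfl⟩ | ⟨a, b, e₁, e₂, h, rfl⟩ | ⟨i, j, k, hij, hik, hjk, e₁, e₂, e₃, h, rfl⟩)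
  · exact Or.inl ⟨twistGen v g, by simp⟩
  · exact Or.inr (Or.inl ⟨a, b, xor e₁ (v.parity a), xor e₂ (v.parity b), h, by simp [twistGen]⟩)
  · refine Or.inr (Or.inr ⟨i, j, k, hij, hik, hjk, xor e₁ (v.parity ⟨(i,j),hij⟩),
      xor e₂ (v.parity ⟨(i,k),hik⟩), xor e₃ (v.parity ⟨(j,k),hjk⟩), ?_, by simp [twistGen]⟩)
    have hparity : ∀ x y z : Multiplicative (ZMod 2),
        xor (decide (x ≠ y)) (xor (decide (x ≠ z)) (decide (y ≠ z))) = false := by decide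
    have := hparity (v i) (v j) (v k)
    simp only [Flips.parity] at this ⊢
    revert h this
    cases e₁ <;> cases e₂ <;> cases e₃ <;> simp

def twist (v : Flips n) : G2p n →* G2p n :=
  PresentedGroup.map (FreeGroup.map (twistGen v)) (mapsTo_twistGen v)

theorem twist_of (v : Flips n) (g : GenP n) : twist v (of g) = of (twistGen v g) := rfl

theorem twist_mul (v w : Flips n) : twist (v * w) = (twist v).comp (twist w) :=
  PresentedGroup.ext fun g => by
    simp only [MonoidHom.comp_apply, twist_of, twistGen, Flips.parity_mul]
    rw [Bool.xor_comm (v.parity g.1), Bool.xor_assoc]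

theorem twist_one : twist (1 : Flips n) = MonoidHom.id _ :=
  PresentedGroup.ext fun g => by simp [twist_of, twistGen, Flips.parity_one]

theorem twist_twist (v : Flips n) : (twist v).comp (twist v) = MonoidHom.id _ := by
  rw [← twist_mul, Flips.mul_self, twist_one]

def twistAut : Flips n →* MulAut (G2p n) where
  toFun v := (twist v).toMulEquiv (twist v) (twist_twist v) (twist_twist v)
  map_one' := MulEquiv.ext fun x => by simp [twist_one]
  map_mul' v w := MulEquiv.ext fun x => by simp [twist_mul]

theorem twistAut_of (v : Flips n) (g : GenP n) :
    twistAut v (of g) = of (g.1, xor g.2 (v.parity g.1)) := rfl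

end G2p

namespace G2d

abbrev tau (i : Fin n) : G2d n := of (Sum.inr i)

abbrev chord (a : GenG n) : G2d n := of (Sum.inl a)

theorem chord_mul_self (a : GenG n) : chord a * chord a = 1 :=
  one_of_mem (Or.inl ⟨a, rfl⟩)

theorem chord_commute (a b : GenG n)
    (h : ({a.1.1, a.1.2, b.1.1, b.1.2} : Finset (Fin n)).card = 4) :
    Commute (chord a) (chord b) :=
  mk_eq_mk_of_mul_inv_mem (Or.inr (Or.inl ⟨a, b, h, rfl⟩))

theorem chord_triple (i j k : Fin n) (hij : i < j) (hik : i < k) (hjk : j < k) :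
    chord ⟨(i,j),hij⟩ * chord ⟨(i,k),hik⟩ * chord ⟨(j,k),hjk⟩ =
      chord ⟨(j,k),hjk⟩ * chord ⟨(i,k),hik⟩ * chord ⟨(i,j),hij⟩ :=
  mk_eq_mk_of_mul_inv_mem (Or.inr (Or.inr (Or.inl ⟨i, j, k, hij, hik, hjk, rfl⟩)))

theorem tau_mul_self (i : Fin n) : tau i * tau i = 1 :=
  one_of_mem (Or.inr (Or.inr (Or.inr (Or.inl ⟨i, rfl⟩))))

theorem tau_inv (i : Fin n) : (tau i)⁻¹ = tau i :=
  inv_eq_of_mul_eq_one_right (tau_mul_self i)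

theorem tau_commute {i j : Fin n} (h : i ≠ j) : Commute (tau i) (tau j) :=
  mk_eq_mk_of_mul_inv_mem (Or.inr (Or.inr (Or.inr (Or.inr (Or.inl ⟨i, j, h, rfl⟩)))))

theorem tau_mul_tau_mul_chord_mul_tau_mul_tau {i j : Fin n} (h : i < j) :
    tau i * tau j * chord ⟨(i,j),h⟩ * tau j * tau i = chord ⟨(i,j),h⟩ :=
  mk_eq_mk_of_mul_inv_mem
    (Or.inr (Or.inr (Or.inr (Or.inr (Or.inr (Or.inl ⟨i, j, h, rfl⟩))))))

theorem chord_commute_tau (a : GenG n) {k : Fin n} (h₁ : k ≠ a.1.1) (h₂ : k ≠ a.1.2) :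
    Commute (chord a) (tau k) :=
  mk_eq_mk_of_mul_inv_mem
    (Or.inr (Or.inr (Or.inr (Or.inr (Or.inr (Or.inr ⟨a, k, h₁, h₂, rfl⟩))))))

theorem tau_mul_mul_tau_cancel (i : Fin n) (x : G2d n) :
    tau i * (tau i * x * tau i) * tau i = x := by
  simp only [← mul_assoc, tau_mul_self, one_mul]
  rw [mul_assoc, tau_mul_self, mul_one]

theorem tau_snd_conj_chord (a : GenG n) :
    tau a.1.2 * chord a * tau a.1.2 = tau a.1.1 * chord a * tau a.1.1 := by
  conv_rhs => rw [← tau_mul_tau_mul_chord_mul_tau_mul_tau a.2]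
  simp only [← mul_assoc, tau_mul_self, one_mul]
  simp only [mul_assoc, tau_mul_self, mul_one]

def twistedChord (a : GenG n) (e : Bool) : G2d n :=
  bif e then tau a.1.1 * chord a * tau a.1.1 else chord a

theorem tau_conj_twistedChord (k : Fin n) (a : GenG n) (e : Bool) :
    tau k * twistedChord a e * tau k = twistedChord a (xor e (decide (k = a.1.1 ∨ k = a.1.2))) := by
  by_cases h₁ : k = a.1.1
  · subst h₁
    cases e <;> simp [twistedChord, tau_mul_mul_tau_cancel]
  · by_cases h₂ : k = a.1.2
    · subst h₂
      cases e <;> simp [twistedChord, h₁, ← tau_snd_conj_chord, tau_mul_mul_tau_cancel]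
    · have hchord : Commute (tau k) (chord a) := (chord_commute_tau a h₁ h₂).symm
      have htau : Commute (tau k) (tau a.1.1) := tau_commute h₁
      have hk : Commute (tau k) (twistedChord a e) := by
        cases e
        · exact hchord
        · exact (htau.mul_right hchord).mul_right htau
      rw [hk.eq, mul_assoc, tau_mul_self, mul_one]
      simp [h₁, h₂]

theorem tau_conj_chord (k : Fin n) (a : GenG n) :
    tau k * chord a * tau k = twistedChord a (decide (k = a.1.1 ∨ k = a.1.2)) :=
  (tau_conj_twistedChord k a false).trans (by rw [Bool.false_xor])

theorem twistedChord_mul_self (a : GenG n) (e : Bool) :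
    twistedChord a e * twistedChord a e = 1 := by
  cases e
  · exact chord_mul_self a
  · calc tau a.1.1 * chord a * tau a.1.1 * (tau a.1.1 * chord a * tau a.1.1)
        = tau a.1.1 * (chord a * (tau a.1.1 * tau a.1.1) * chord a) * tau a.1.1 := by
          simp only [mul_assoc]
      _ = 1 := by rw [tau_mul_self, mul_one, chord_mul_self, mul_one, tau_mul_self]

theorem twistedChord_commute (a b : GenG n) (e₁ e₂ : Bool)
    (h : ({a.1.1, a.1.2, b.1.1, b.1.2} : Finset (Fin n)).card = 4) :
    Commute (twistedChord a e₁) (twistedChord b e₂) := by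
  obtain ⟨-, h₁₃, h₁₄, h₂₃, -, -⟩ := Finset.pairwise_ne_of_card_eq_four h
  have hchord : Commute (chord a) (twistedChord b e₂) := by
    have hab := chord_commute a b h
    have hτ := chord_commute_tau a (k := b.1.1) h₁₃.symm h₂₃.symm
    cases e₂
    · exact hab
    · exact (hτ.mul_right hab).mul_right hτ
  have htau : Commute (tau a.1.1) (twistedChord b e₂) := by
    have hb := (chord_commute_tau b (k := a.1.1) h₁₃ h₁₄).symm
    have hτ := tau_commute h₁₃
    cases e₂
    · exact hb
    · exact (hτ.mul_right hb).mul_right hτ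
  cases e₁
  · exact hchord
  · exact (htau.mul_left hchord).mul_left htau

theorem twistedChord_triple (i j k : Fin n) (hij : i < j) (hik : i < k) (hjk : j < k)
    (e₁ e₂ e₃ : Bool) (h : xor e₁ (xor e₂ e₃) = false) :
    twistedChord ⟨(i,j),hij⟩ e₁ * twistedChord ⟨(i,k),hik⟩ e₂ * twistedChord ⟨(j,k),hjk⟩ e₃ =
      twistedChord ⟨(j,k),hjk⟩ e₃ * twistedChord ⟨(i,k),hik⟩ e₂ *
        twistedChord ⟨(i,j),hij⟩ e₁ := by
  -- the twisted relations are the untwisted one conjugated by `τ_k`, `τ_j` or `τ_i`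
  have hconj (m : Fin n) := congrArg (MulAut.conj (tau m)) (chord_triple i j k hij hik hjk)
  simp only [map_mul, MulAut.conj_apply, tau_inv, tau_conj_chord] at hconj
  have hne := And.intro hij.ne <| And.intro hik.ne <| And.intro hjk.ne <|
    And.intro hij.ne' <| And.intro hik.ne' hjk.ne'
  cases e₁ <;> cases e₂ <;> cases e₃ <;> simp at h
  · exact chord_triple i j k hij hik hjk
  · simpa [hne] using hconj k
  · simpa [hne] using hconj j
  · simpa [hne] using hconj i

end G2d

def G2p.toG2d : G2p n →* G2d n :=
  toGroup (f := fun g : GenP n => G2d.twistedChord g.1 g.2) <| by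
    rintro r (⟨g, rfl⟩ | ⟨a, b, e₁, e₂, h, rfl⟩ | ⟨i, j, k, hij, hik, hjk, e₁, e₂, e₃, h, rfl⟩) <;>
      simp only [map_mul, map_inv, FreeGroup.lift_apply_of, mul_inv_eq_one]
    · exact G2d.twistedChord_mul_self g.1 g.2
    · exact (G2d.twistedChord_commute a b e₁ e₂ h).eq
    · exact G2d.twistedChord_triple i j k hij hik hjk e₁ e₂ e₃ h

theorem G2p.toG2d_of (g : GenP n) : toG2d (of g) = G2d.twistedChord g.1 g.2 :=
  toGroup.of _

namespace G2d

open G2p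

abbrev Semidirect (n : ℕ) := G2p n ⋊[twistAut] Flips n

theorem inr_mul_inl_mul_inr (v : Flips n) (x : G2p n) :
    (inr v * inl x * inr v : Semidirect n) = inl (twistAut v x) := by
  rw [inl_aut, inv_eq_of_mul_eq_one_right (Flips.mul_self v)]

def toSemidirect : G2d n →* Semidirect n :=
  toGroup (f := Sum.elim (fun a => inl (of (a, false))) (fun i => inr (Flips.single i))) <| by
    rintro r (⟨a, rfl⟩ | ⟨a, b, h, rfl⟩ | ⟨i, j, k, hij, hik, hjk, rfl⟩ | ⟨i, rfl⟩ |
      ⟨i, j, -, rfl⟩ | ⟨i, j, h, rfl⟩ | ⟨a, k, h₁, h₂, rfl⟩) <;>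
      simp only [map_mul, map_inv, FreeGroup.lift_apply_of, Sum.elim_inl, Sum.elim_inr,
        mul_inv_eq_one]
    · rw [← map_mul, G2p.of_mul_self, map_one]
    · rw [← map_mul, ← map_mul, (G2p.of_commute a b false false h).eq]
    · simp only [← map_mul, G2p.of_triple i j k hij hik hjk false false false rfl]
    · rw [← map_mul, Flips.mul_self, map_one]
    · rw [← map_mul, ← map_mul, mul_comm]
    · calc _ = inr (Flips.single i) * (inr (Flips.single j) * inl (of (⟨(i,j),h⟩, false)) *
              inr (Flips.single j)) * inr (Flips.single i) := by simp only [mul_assoc]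
        _ = _ := by
          rw [inr_mul_inl_mul_inr, inr_mul_inl_mul_inr, twistAut_of, twistAut_of,
            Flips.parity_single, Flips.parity_single]
          simp [h.ne']
    · rw [inr_mul_inl, twistAut_of, Flips.parity_single]
      simp [h₁, h₂]

theorem toSemidirect_chord (a : GenG n) : toSemidirect (chord a) = inl (of (a, false)) :=
  toGroup.of _

theorem toSemidirect_tau (i : Fin n) : toSemidirect (tau i) = inr (Flips.single i) :=
  toGroup.of _

def tauHom : Flips n →* G2d n :=
  MonoidHom.noncommPiCoprod (fun i => zmodTwoHom (tau i) (tau_mul_self i))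
    fun _ _ hij => zmodTwoHom_commute _ _ (tau_commute hij)

theorem tauHom_single (i : Fin n) : tauHom (Flips.single i) = tau i :=
  (MonoidHom.noncommPiCoprod_mulSingle _ _ _).trans (zmodTwoHom_ofAdd_one _ _)

theorem toG2d_comp_twistAut (v : Flips n) :
    toG2d.comp (twistAut v).toMonoidHom = (MulAut.conj (tauHom v)).toMonoidHom.comp toG2d := by
  induction v using Pi.mulSingle_induction with
  | one => ext; simp
  | mul v w hv hw =>
    refine MonoidHom.ext fun x => ?_
    have hv' := DFunLike.congr_fun hv (twistAut w x)
    have hw' := DFunLike.congr_fun hw x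
    simp only [MonoidHom.comp_apply, MulEquiv.coe_toMonoidHom] at hv' hw' ⊢
    rw [map_mul, MulAut.mul_apply, hv', hw', map_mul, map_mul, MulAut.mul_apply]
  | mulSingle i m =>
    obtain rfl | rfl := zmod_two_eq_one_or_eq_ofAdd_one m
    · ext; simp
    · refine PresentedGroup.ext fun g => ?_
      simp only [MonoidHom.comp_apply, MulEquiv.coe_toMonoidHom, twistAut_of, toG2d_of,
        MulAut.conj_apply]
      rw [← Flips.single, tauHom_single, tau_inv, tau_conj_twistedChord, Flips.parity_single]

def ofSemidirect : Semidirect n →* G2d n := lift toG2d tauHom toG2d_comp_twistAut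

theorem ofSemidirect_toSemidirect (g : G2d n) : ofSemidirect (toSemidirect g) = g := by
  suffices h : ofSemidirect.comp toSemidirect = MonoidHom.id (G2d n) from DFunLike.congr_fun h g
  refine PresentedGroup.ext fun x => ?_
  rcases x with a | i
  · simp [toSemidirect_chord, ofSemidirect, toG2d_of, twistedChord]
  · simp [toSemidirect_tau, ofSemidirect, tauHom_single]

theorem toSemidirect_injective : Function.Injective (toSemidirect (n := n)) :=
  Function.LeftInverse.injective ofSemidirect_toSemidirect

theorem toSemidirect_toG2d (x : G2p n) : toSemidirect (toG2d x) = inl x := by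
  suffices h : toSemidirect.comp toG2d = inl from DFunLike.congr_fun h x
  refine PresentedGroup.ext fun ⟨a, e⟩ => ?_
  cases e
  · simp [toG2d_of, twistedChord, toSemidirect_chord]
  · simp only [MonoidHom.comp_apply, toG2d_of, twistedChord, cond_true, map_mul,
      toSemidirect_chord, toSemidirect_tau]
    rw [inr_mul_inl_mul_inr, twistAut_of, Flips.parity_single]
    simp

theorem Ni_eq_eval_comp_rightHom (i : Fin n) :
    Ni n i = (Pi.evalMonoidHom _ i).comp (rightHom.comp (toSemidirect (n := n))) := by
  refine PresentedGroup.ext fun x => ?_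
  rcases x with a | k
  · simp [Ni, NiMap, toSemidirect_chord]
  · simp [Ni, NiMap, toSemidirect_tau, Flips.single, Pi.mulSingle_apply, eq_comm]

theorem Hsub_eq_ker : Hsub n = (rightHom.comp (toSemidirect (n := n))).ker := by
  ext g
  simp [Hsub, Subgroup.mem_iInf, Ni_eq_eval_comp_rightHom, funext_iff]

theorem wordProd_cons (x : GenD n) (w : List (GenD n)) :
    wordProd n (x :: w) = of x * wordProd n w := by
  simp [wordProd]

theorem chiWord_eq_left (w : List (GenD n)) (c : Fin n → Bool) :
    chiWord w c = (inr (Flips.ofColoring c) * toSemidirect (wordProd n w)).left := by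
  induction w generalizing c with
  | nil => simp [chiWord, wordProd]
  | cons x w ih =>
    rcases x with a | i
    · rw [chiWord, wordProd_cons, map_mul, toSemidirect_chord, ← mul_assoc, inr_mul_inl,
        mul_assoc, left_inl_mul, ← ih, twistAut_of, Flips.parity_ofColoring, Bool.false_xor]
    · rw [chiWord, wordProd_cons, map_mul, toSemidirect_tau, ← mul_assoc, ← map_mul,
        Flips.ofColoring_mul_single, ih]

end G2d

end

theorem phi_iso_H (n : ℕ) :
    ∃ e : G2p n ≃* Hsub n,
      (∀ a : GenG n,
        ((e (PresentedGroup.of (a, false)) : G2d n) = PresentedGroup.of (Sum.inl a)) ∧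
        ((e (PresentedGroup.of (a, true)) : G2d n) =
          PresentedGroup.of (Sum.inr a.1.1) * PresentedGroup.of (Sum.inl a) *
            PresentedGroup.of (Sum.inr a.1.1))) ∧
      ∀ (w : List (GenD n)) (h : wordProd n w ∈ Hsub n),
        e.symm ⟨wordProd n w, h⟩ = chiWord w (fun _ => false) := by
  let e : G2p n ≃* Hsub n :=
    (mulEquivKerOfInjective G2p.toG2d G2d.toSemidirect G2d.toSemidirect_injective
      G2d.toSemidirect_toG2d).trans (MulEquiv.subgroupCongr G2d.Hsub_eq_ker.symm)
  refine ⟨e, fun a => ⟨G2p.toG2d_of (a, false), G2p.toG2d_of (a, true)⟩, fun w h => ?_⟩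
  rw [G2d.chiWord_eq_left, Flips.ofColoring_false, map_one, one_mul]
  rfl
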